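/- arXiv:1809.00989 — 3 statements merged into one kernel-verified Lean document; each statement's English description precedes it below -/
import Mathlib

section
/- Define the psychological best-response curve of the soldier (row player) by α'(β') = (F₃β' + F₄)/(F₁β' + F₂), where F₁ = ω_a(π_{2,1} + π_{1,1} − π_{1,2} − π_{2,2}), F₂ = (π'_{2,2} − π'_{2,1}) + (π'_{1,1} − π'_{1,2}) + ω_a(π_{1,2} − π_{1,1}), F₃ = ω_a(π_{2,1} − π_{2,2}), F₄ = π'_{2,2} − π'_{2,1}. Under the inequalities π_{1,2} > π_{2,2} ≥ π_{1,1}, π_{2,1} > π_{2,2} ≥ π_{1,1}, π'_{1,1} ≥ π'_{2,2} > π'_{1,2}, π'_{1,1} ≥ π'_{2,2} > π'_{2,1}, ω_a ∈ (0,1], and the additional condition π'_{2,2} − π'_{2,1} ≥ θ₁(π_{2,1} − π_{2,2}) with ω_a ≤ θ₁, the quantity F₂F₃ − F₁F₄ is strictly positive, and hence α'(β') is strictly increasing on [0,1]. -/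
/-- the soldier's psychological best-response curve is strictly
increasing on [0,1], since F₂F₃ − F₁F₄ > 0. -/
theorem stmt_3 (π11 π12 π21 π22 π'11 π'12 π'21 π'22 ωa θ1 : ℝ)
    (h1 : π12 > π22) (h2 : π22 ≥ π11) (h3 : π21 > π22)
    (h4 : π'11 ≥ π'22) (h5 : π'22 > π'12) (h6 : π'22 > π'21)
    (hωa : ωa ∈ Set.Ioc (0 : ℝ) 1)
    (hθ : π'22 - π'21 ≥ θ1 * (π21 - π22)) (hωθ : ωa ≤ θ1)
    (F1 F2 F3 F4 : ℝ)
    (hF1 : F1 = ωa * (π21 + π11 - π12 - π22))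
    (hF2 : F2 = (π'22 - π'21) + (π'11 - π'12) + ωa * (π12 - π11))
    (hF3 : F3 = ωa * (π21 - π22))
    (hF4 : F4 = π'22 - π'21) :
    0 < F2 * F3 - F1 * F4 ∧
    StrictMonoOn (fun β' : ℝ => (F3 * β' + F4) / (F1 * β' + F2))
      (Set.Icc (0 : ℝ) 1) := by
  obtain ⟨hω0, hω1⟩ := hωa
  have hkey : 0 < F2 * F3 - F1 * F4 := by
    subst hF1 hF2 hF3 hF4
    nlinarith [mul_pos (sub_pos.mpr h5) (sub_pos.mpr h3),
      mul_pos (sub_pos.mpr h6) (sub_pos.mpr (lt_of_le_of_lt h2 h1)),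
      mul_pos hω0 (mul_pos (sub_pos.mpr (lt_of_le_of_lt h2 h1)) (sub_pos.mpr h3)),
      mul_nonneg hω0.le (mul_nonneg (sub_nonneg.mpr h4) (sub_pos.mpr h3).le)]
  have hF2pos : 0 < F2 := by subst hF2; nlinarith
  have hF12pos : 0 < F1 + F2 := by subst hF1 hF2; nlinarith
  have hden : ∀ x ∈ Set.Icc (0 : ℝ) 1, 0 < F1 * x + F2 := by
    intro x ⟨hx0, hx1⟩
    nlinarith [mul_nonneg hx0 hF12pos.le, mul_nonneg (sub_nonneg.mpr hx1) hF2pos.le]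
  refine ⟨hkey, ?_⟩
  intro x hx y hy hxy
  have hdx := hden x hx
  have hdy := hden y hy
  simp only
  rw [div_lt_div_iff₀ hdx hdy]
  nlinarith [mul_pos hkey (sub_pos.mpr hxy)]
end

section
/- Define the psychological best-response curve of the attacker (column player) by α'(β') = (F'₃β' + F'₄)/(F'₁β' + F'₂), where F'₁ = ω_s(π'_{1,2} + π'_{1,1} − π'_{2,1} − π'_{2,2}), F'₂ = ω_s(π'_{2,2} − π'_{1,2}), F'₃ = −(π_{1,2} + π_{2,1} − π_{1,1} − π_{2,2}) − ω_s(π'_{2,2} − π'_{1,2}), F'₄ = (π_{1,2} − π_{2,2}) + ω_s(π'_{2,2} − π'_{1,2}). Under the inequalities π_{1,2} > π_{2,2} ≥ π_{1,1}, π_{2,1} > π_{2,2} ≥ π_{1,1}, π'_{1,1} ≥ π'_{2,2} > π'_{1,2}, π'_{1,1} ≥ π'_{2,2} > π'_{2,1}, and ω_s ∈ (0,1], the quantity F'₂F'₃ − F'₁F'₄ satisfies F'₂F'₃ − F'₁F'₄ ≤ ω_s(π'_{2,2} − π'_{1,2})(π_{1,1} − π_{2,1}) < 0, so α'(β') is strictly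 decreasing on [0,1]. -/
/-!
With `p = π'₂₂ - π'₁₂ > 0`, the determinant of the Möbius map `β' ↦ (F'₃β' + F'₄)/(F'₁β' + F'₂)`
expands to `ω_s p (π₁₁ - π₂₁) - ω_s (π'₁₁ - π'₂₁)(π₁₂ - π₂₂ + ω_s p)`, and the payoff inequalities
make the subtracted term nonnegative. A Möbius map whose denominator stays positive and whose
determinant is negative is strictly decreasing.
-/

theorem strictAntiOn_div_affine_of_det_neg {𝕜 : Type*} [Field 𝕜] [LinearOrder 𝕜]
    [IsStrictOrderedRing 𝕜] {a b c d : 𝕜} {s : Set 𝕜}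
    (hpos : ∀ x ∈ s, 0 < a * x + b) (hdet : b * c - a * d < 0) :
    StrictAntiOn (fun x => (c * x + d) / (a * x + b)) s := by
  intro x hx y hy hxy
  rw [div_lt_div_iff₀ (hpos y hy) (hpos x hx), ← sub_pos]
  have hcross : (c * x + d) * (a * y + b) - (c * y + d) * (a * x + b) =
      (b * c - a * d) * (x - y) := by
    ring
  rw [hcross]
  exact mul_pos_of_neg_of_neg hdet (sub_neg.2 hxy)

/-- the attacker's psychological best-response curve is strictly
decreasing on [0,1], since F'₂F'₃ − F'₁F'₄ ≤ ω_s(π'₂₂−π'₁₂)(π₁₁−π₂₁) < 0. -/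
theorem stmt_4 (π11 π12 π21 π22 π'11 π'12 π'21 π'22 ωs : ℝ)
    (h1 : π12 > π22) (h2 : π22 ≥ π11) (h3 : π21 > π22)
    (h4 : π'11 ≥ π'22) (h5 : π'22 > π'12) (h6 : π'22 > π'21)
    (hωs : ωs ∈ Set.Ioc (0 : ℝ) 1)
    (F'1 F'2 F'3 F'4 : ℝ)
    (hF1 : F'1 = ωs * (π'12 + π'11 - π'21 - π'22))
    (hF2 : F'2 = ωs * (π'22 - π'12))
    (hF3 : F'3 = -(π12 + π21 - π11 - π22) - ωs * (π'22 - π'12))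
    (hF4 : F'4 = (π12 - π22) + ωs * (π'22 - π'12))
    (hden : ∀ β' ∈ Set.Icc (0 : ℝ) 1, 0 < F'1 * β' + F'2) :
    (F'2 * F'3 - F'1 * F'4 ≤ ωs * (π'22 - π'12) * (π11 - π21) ∧
      ωs * (π'22 - π'12) * (π11 - π21) < 0) ∧
    StrictAntiOn (fun β' : ℝ => (F'3 * β' + F'4) / (F'1 * β' + F'2))
      (Set.Icc (0 : ℝ) 1) := by
  obtain ⟨hω, -⟩ := hωs
  have hp : 0 < π'22 - π'12 := sub_pos.2 h5
  have hdet : F'2 * F'3 - F'1 * F'4 = ωs * (π'22 - π'12) * (π11 - π21) -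
      ωs * (π'11 - π'21) * (π12 - π22 + ωs * (π'22 - π'12)) := by
    subst hF1 hF2 hF3 hF4
    ring
  have hle : F'2 * F'3 - F'1 * F'4 ≤ ωs * (π'22 - π'12) * (π11 - π21) := by
    rw [hdet]
    refine sub_le_self _ (mul_nonneg (mul_nonneg hω.le (by linarith)) ?_)
    exact add_nonneg (sub_nonneg.2 h1.le) (mul_pos hω hp).le
  have hneg : ωs * (π'22 - π'12) * (π11 - π21) < 0 :=
    mul_neg_of_pos_of_neg (mul_pos hω hp) (by linarith)
  exact ⟨⟨hle, hneg⟩, strictAntiOn_div_affine_of_det_neg hden (hle.trans_lt hneg)⟩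
end

section
/- In the psychological 2x2 stage game, the attacker's psychological expected payoff from playing action b₁ with probability β against soldier strategy/belief α' (equal to second-order belief) is β'[α'(π'_{1,1} + ω_a(1−β')(π_{1,2} − π_{1,1})) + (1−α')π'_{2,1}] + (1−β')[α'π'_{1,2} + (1−α')(π'_{2,2} + ω_a β'(π_{2,1} − π_{2,2}))]; setting the attacker indifferent between b₁ and b₂ (equating the bracketed expressions) and solving for α' yields α' = (ω_a β'(π_{2,1} − π_{2,2}) + (π'_{2,2} − π'_{2,1})) / (D' + ω_a[β'(π_{2,1} − π_{2,2}) + (1 − β')(π_{1,2} − π_{1,1})]), where D' = π'_{1,1} + π'_{2,2} − π'_{1,2} − π'_{2,1}, provided the denominator is nonzero. -/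
theorem eq_div_of_mix_eq_mix {K : Type*} [Field K] {x a b c d : K}
    (h : x * a + (1 - x) * b = x * c + (1 - x) * d) (hden : a - c + d - b ≠ 0) :
    x = (d - b) / (a - c + d - b) := by
  rw [eq_div_iff hden]
  linear_combination h

/-- solving the attacker's psychological indifference condition
for α' yields the stated closed form. -/
theorem stmt_15 (π11 π12 π21 π22 π'11 π'12 π'21 π'22 ωa α' β' D' : ℝ)
    (hD' : D' = π'11 + π'22 - π'12 - π'21)
    (hindiff : α' * (π'11 + ωa * (1 - β') * (π12 - π11)) + (1 - α') * π'21 =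
      α' * π'12 + (1 - α') * (π'22 + ωa * β' * (π21 - π22)))
    (hden : D' + ωa * (β' * (π21 - π22) + (1 - β') * (π12 - π11)) ≠ 0) :
    α' = (ωa * β' * (π21 - π22) + (π'22 - π'21)) /
      (D' + ωa * (β' * (π21 - π22) + (1 - β') * (π12 - π11))) := by
  subst hD'
  have hden' : π'11 + ωa * (1 - β') * (π12 - π11) - π'12
      + (π'22 + ωa * β' * (π21 - π22)) - π'21 ≠ 0 := by
    convert hden using 1; ring
  convert eq_div_of_mix_eq_mix hindiff hden' using 2 <;> ring
end
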